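/- If d* ≥ 0, then P(Θ = ∅) = lim_{j→∞} Φ_j(f_j), the limit being decreasing in j. -/

import Mathlib

open MeasureTheory ProbabilityTheory Filter Set Metric
open scoped ENNReal NNReal Topology Classical

noncomputable section

/-- Words of the tree `U₀`: the letter at position `i` lies in `{0, …, m i − 1}`
(we use `0`-based letters instead of the paper's `{1,…,m_{i}}`). -/
def TreeValid (m : ℕ → ℕ) (u : List ℕ) : Prop :=
  ∀ i, ∀ h : i < u.length, u.get ⟨i, h⟩ < m i

/-- The finite set of valid words of length `j`. -/
def treeWords (m : ℕ → ℕ) : ℕ → Finset (List ℕ)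
  | 0 => {[]}
  | j + 1 => (treeWords m j).biUnion fun u => (Finset.range (m j)).image fun k => u ++ [k]

/-- The finite word made of the first `j` letters of `ζ`. -/
def prefixWord (ζ : ℕ → ℕ) (j : ℕ) : List ℕ := List.ofFn fun i : Fin j => ζ i

variable {Ω : Type} [MeasurableSpace Ω] {d : ℕ}

/-- Contraction ratios `L_v = diam J_v / diam J_{π(v)}`. -/
def ratioL (J : List ℕ → Ω → Set (EuclideanSpace ℝ (Fin d))) (v : List ℕ) (ω : Ω) : ℝ :=
  diam (J v ω) / diam (J v.dropLast ω)

/-- Membership of the word `v` in the subtree `τ_u`. -/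
def memTau (m : ℕ → ℕ) (X : List ℕ → Ω → Bool) (u v : List ℕ) (ω : Ω) : Prop :=
  TreeValid m v ∧ u <+: v ∧ ∀ j, u.length ≤ j → j ≤ v.length → X (v.take j) ω = true

/-- The compact set `K_u`, i.e. the points `x_ζ` for `ζ ∈ ∂τ_u`. -/
def Kset (m : ℕ → ℕ) (J : List ℕ → Ω → Set (EuclideanSpace ℝ (Fin d)))
    (X : List ℕ → Ω → Bool) (u : List ℕ) (ω : Ω) : Set (EuclideanSpace ℝ (Fin d)) :=
  {x | ∃ ζ : ℕ → ℕ, (∀ j, u.length ≤ j → memTau m X u (prefixWord ζ j) ω) ∧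
    ∀ j : ℕ, x ∈ J (prefixWord ζ j) ω}

/-- The limit set `Θ`. -/
def ThetaSet (m : ℕ → ℕ) (J : List ℕ → Ω → Set (EuclideanSpace ℝ (Fin d)))
    (X : List ℕ → Ω → Bool) (ω : Ω) : Set (EuclideanSpace ℝ (Fin d)) :=
  ⋃ u ∈ {u : List ℕ | TreeValid m u}, Kset m J X u ω

/-- Hausdorff dimension with the convention `dim ∅ = −∞`. -/
def hdimE {Y : Type*} [EMetricSpace Y] (S : Set Y) : EReal :=
  if S = ∅ then ⊥ else ((dimH S : ℝ≥0∞) : EReal)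

/-- The coefficient `α_{s,j}`. -/
def alphaCoef (m : ℕ → ℕ) (μ : ∀ j : ℕ, Measure (Fin (m j) → ℝ))
    (ν : Bool → ∀ j : ℕ, Measure (Fin (m j) → Bool)) (s : ℝ) (j : ℕ) : ℝ :=
  ∫ x, ∫ ℓ, (∑ k, ℓ k ^ s * (if x k then (1 : ℝ) else 0)) ∂μ j ∂ν true j

/-- The set of admissible `j₀` in the definition of `j̲`. -/
def jlowSet (m : ℕ → ℕ) (μ : ∀ j : ℕ, Measure (Fin (m j) → ℝ))
    (ν : Bool → ∀ j : ℕ, Measure (Fin (m j) → Bool)) : Set ℕ :=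
  {j₀ | ∀ j, j₀ ≤ j → 0 < alphaCoef m μ ν 0 j}

/-- `j̲` (meaningful when `jlowSet` is nonempty). -/
def jlow (m : ℕ → ℕ) (μ : ∀ j : ℕ, Measure (Fin (m j) → ℝ))
    (ν : Bool → ∀ j : ℕ, Measure (Fin (m j) → Bool)) : ℕ :=
  sInf (jlowSet m μ ν)

/-- The function `ρ`. -/
def rhoFn (m : ℕ → ℕ) (μ : ∀ j : ℕ, Measure (Fin (m j) → ℝ))
    (ν : Bool → ∀ j : ℕ, Measure (Fin (m j) → Bool)) (s : ℝ) : EReal :=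
  liminf (fun j : ℕ =>
    (((1 : ℝ) / j * ∑ n ∈ Finset.Ico (jlow m μ ν) j, Real.log (alphaCoef m μ ν s n) : ℝ) : EReal))
    atTop

/-- The critical dimension `d_*`. -/
def dstar (m : ℕ → ℕ) (μ : ∀ j : ℕ, Measure (Fin (m j) → ℝ))
    (ν : Bool → ∀ j : ℕ, Measure (Fin (m j) → Bool)) : EReal :=
  if (jlowSet m μ ν).Nonempty then sSup ((fun s : ℝ => (s : EReal)) '' {s | 0 < rhoFn m μ ν s})
  else ⊥

/-- The σ-field generated by the `X_v` for `v` not a strict descendant of `u`. -/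
def pastSigma (m : ℕ → ℕ) (X : List ℕ → Ω → Bool) (u : List ℕ) : MeasurableSpace Ω :=
  ⨆ v ∈ {v : List ℕ | TreeValid m v ∧ ¬(u <+: v ∧ u ≠ v)}, MeasurableSpace.comap (X v) ⊤

/-- All the standing hypotheses of the model: `(J_u)` is a family of random compacts of positive
diameter satisfying (A), (B), (C), and `(X_u)` is an independent tree-indexed Markov chain with
transition kernels `ν`, in the sense of the Markov condition (D). -/
structure Hyp (d : ℕ) (m : ℕ → ℕ) (βl βh : ℝ)
    (μ : ∀ j : ℕ, Measure (Fin (m j) → ℝ))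
    (ν : Bool → ∀ j : ℕ, Measure (Fin (m j) → Bool))
    (P : Measure Ω)
    (J : List ℕ → Ω → Set (EuclideanSpace ℝ (Fin d)))
    (X : List ℕ → Ω → Bool) : Prop where
  hd : 1 ≤ d
  hm : ∀ j, 2 ≤ m j
  hβl : 0 < βl
  hβlh : βl ≤ βh
  hβh : βh < 1
  hμ : ∀ j, IsProbabilityMeasure (μ j)
  hμsupp : ∀ j, μ j {ℓ | ∀ k, ℓ k ∈ Icc βl βh} = 1
  hν : ∀ t j, IsProbabilityMeasure (ν t j)
  hP : IsProbabilityMeasure P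
  hJcompact : ∀ u, TreeValid m u → ∀ ω, IsCompact (J u ω)
  hJdiam : ∀ u, TreeValid m u → ∀ ω, 0 < diam (J u ω)
  hAsub : ∀ u, TreeValid m u → ∀ ω, ∀ k, k < m u.length → J (u ++ [k]) ω ⊆ J u ω
  hAdisj : ∀ u, TreeValid m u → ∀ ω, ∀ k l, k < m u.length → l < m u.length → k ≠ l →
      interior (J (u ++ [k]) ω) ∩ interior (J (u ++ [l]) ω) = ∅
  hB : ∃ κ : ℝ, 0 < κ ∧ ∀ u, TreeValid m u → ∀ ω,
      ENNReal.ofReal (κ * diam (J u ω) ^ d) ≤ volume (interior (J u ω))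
  hLmeas : ∀ v : List ℕ, Measurable (ratioL J v)
  hXmeas : ∀ v : List ℕ, Measurable (X v)
  hCindep : iIndepFun
      (fun u : {u : List ℕ // TreeValid m u} => fun ω => fun k : Fin (m u.1.length) =>
        ratioL J (u.1 ++ [(k : ℕ)]) ω) P
  hClaw : ∀ u : {u : List ℕ // TreeValid m u},
      Measure.map (fun ω => fun k : Fin (m u.1.length) => ratioL J (u.1 ++ [(k : ℕ)]) ω) P
        = μ u.1.length
  hLXindep : Indep
      (⨆ v ∈ {v : List ℕ | TreeValid m v ∧ v ≠ []},
        MeasurableSpace.comap (ratioL J v) inferInstance)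
      (⨆ v ∈ {v : List ℕ | TreeValid m v}, MeasurableSpace.comap (X v) ⊤) P
  hMarkov : ∀ u, TreeValid m u → ∀ A : Set (Fin (m u.length) → Bool), MeasurableSet A →
      (P[(Set.indicator {ω | (fun k : Fin (m u.length) => X (u ++ [(k : ℕ)]) ω) ∈ A}
          fun _ => (1 : ℝ)) | pastSigma m X u]) =ᵐ[P] fun ω => (ν (X u ω) u.length A).toReal

/-- Number of vertices of generation `j` in state `1`, i.e. `#S_j`. -/
def Scount (m : ℕ → ℕ) (X : List ℕ → Ω → Bool) (j : ℕ) (ω : Ω) : ℕ :=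
  ((treeWords m j).filter fun u => X u ω = true).card

/-- Generating function `Φ_j` of `#S_j`. -/
def PhiFn (P : Measure Ω) (m : ℕ → ℕ) (X : List ℕ → Ω → Bool) (j : ℕ) (z : ℝ) : ℝ :=
  ∫ ω, z ^ Scount m X j ω ∂P

/-- Generating function `φ_{t,j}`. -/
def phiFn (m : ℕ → ℕ) (ν : Bool → ∀ j : ℕ, Measure (Fin (m j) → Bool)) (t : Bool) (j : ℕ)
    (z : ℝ) : ℝ :=
  ∫ x, z ^ (Finset.univ.filter fun k : Fin (m j) => x k = true).card ∂ν t j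

/-- The composition `φ_{1,j} ∘ … ∘ φ_{1,j+n}`. -/
def phiComp (m : ℕ → ℕ) (ν : Bool → ∀ j : ℕ, Measure (Fin (m j) → Bool)) :
    ℕ → ℕ → ℝ → ℝ
  | j, 0, z => phiFn m ν true j z
  | j, n + 1, z => phiFn m ν true j (phiComp m ν (j + 1) n z)

/-- The extinction probability `f_j = lim ↑ φ_{1,j} ∘ … ∘ φ_{1,j+n}(0)`. -/
def fExt (m : ℕ → ℕ) (ν : Bool → ∀ j : ℕ, Measure (Fin (m j) → Bool)) (j : ℕ) : ℝ :=
  ⨆ n : ℕ, phiComp m ν j n 0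

/-- `φ'_{1,n}(1)` as an extended nonnegative real. -/
def Dcoef (m : ℕ → ℕ) (ν : Bool → ∀ j : ℕ, Measure (Fin (m j) → Bool)) (n : ℕ) : ℝ≥0∞ :=
  ENNReal.ofReal (deriv (phiFn m ν true n) 1)

/-- The quantity `σ̲_j`. -/
def sigmaLow (m : ℕ → ℕ) (ν : Bool → ∀ j : ℕ, Measure (Fin (m j) → Bool)) (j : ℕ) : ℝ≥0∞ :=
  max 1
    ((∑' n : ℕ,
        ENNReal.ofReal (deriv (phiFn m ν true (j + n)) 1 + phiFn m ν true (j + n) 0 - 1) /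
          (Dcoef m ν (j + n) * ∏ ℓ ∈ Finset.Icc j (j + n), Dcoef m ν ℓ)) +
      limsup (fun n : ℕ => (∏ ℓ ∈ Finset.Icc j n, Dcoef m ν ℓ)⁻¹) atTop)

/-- The quantity `σ̄_j`. -/
def sigmaHigh (m : ℕ → ℕ) (ν : Bool → ∀ j : ℕ, Measure (Fin (m j) → Bool)) (j : ℕ) : ℝ≥0∞ :=
  (∑' n : ℕ,
      ENNReal.ofReal (deriv (deriv (phiFn m ν true (j + n))) 1) /
        (Dcoef m ν (j + n) * ∏ ℓ ∈ Finset.Icc j (j + n), Dcoef m ν ℓ)) +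
    liminf (fun n : ℕ => (∏ ℓ ∈ Finset.Icc j n, Dcoef m ν ℓ)⁻¹) atTop

/-! ### Auxiliary lemmas: tree combinatorics -/

section TreeAux
variable {m : ℕ → ℕ}

lemma treeValid_iff {u : List ℕ} : TreeValid m u ↔ ∀ i (h : i < u.length), u[i] < m i := by
  simp [TreeValid, List.get_eq_getElem]

lemma treeValid_append_iff {u : List ℕ} {k : ℕ} :
    TreeValid m (u ++ [k]) ↔ TreeValid m u ∧ k < m u.length := by
  simp only [treeValid_iff]
  constructor
  · intro h
    refine ⟨fun i hi => ?_, ?_⟩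
    · have h2 : i < (u ++ [k]).length := by simp; omega
      have := h i h2
      rwa [List.getElem_append_left hi] at this
    · have h2 : u.length < (u ++ [k]).length := by simp
      have := h u.length h2
      simpa using this
  · rintro ⟨h1, h2⟩ i hi
    simp only [List.length_append, List.length_singleton] at hi
    rcases Nat.lt_or_ge i u.length with h | h
    · rw [List.getElem_append_left h]; exact h1 i h
    · have : i = u.length := by omega
      subst this
      simpa using h2

lemma treeValid_take {u : List ℕ} (h : TreeValid m u) (n : ℕ) : TreeValid m (u.take n) := by
  rw [treeValid_iff] at h ⊢
  intro i hi
  simp only [List.length_take, lt_min_iff] at hi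
  rw [List.getElem_take]
  exact h i hi.2

lemma mem_treeWords {j : ℕ} {u : List ℕ} :
    u ∈ treeWords m j ↔ TreeValid m u ∧ u.length = j := by
  induction j generalizing u with
  | zero =>
    simp only [treeWords, Finset.mem_singleton]
    constructor
    · rintro rfl; exact ⟨fun i h => by simp at h, rfl⟩
    · rintro ⟨-, h⟩; exact List.eq_nil_of_length_eq_zero h
  | succ j ih =>
    simp only [treeWords, Finset.mem_biUnion, Finset.mem_image, Finset.mem_range]
    constructor
    · rintro ⟨w, hw, k, hk, rfl⟩
      rcases ih.1 hw with ⟨hv, hl⟩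
      exact ⟨treeValid_append_iff.2 ⟨hv, hl ▸ hk⟩, by simp [hl]⟩
    · rintro ⟨hv, hl⟩
      have hne : u ≠ [] := by intro h; simp [h] at hl
      obtain ⟨w, k, rfl⟩ : ∃ w k, u = w ++ [k] :=
        ⟨u.dropLast, u.getLast hne, (List.dropLast_append_getLast hne).symm⟩
      rcases treeValid_append_iff.1 hv with ⟨hw, hk⟩
      have hwl : w.length = j := by simp at hl; omega
      exact ⟨w, ih.2 ⟨hw, hwl⟩, k, hwl ▸ hk, rfl⟩

lemma prefixWord_length (ζ : ℕ → ℕ) (j : ℕ) : (prefixWord ζ j).length = j := by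
  simp [prefixWord]

lemma prefixWord_getElem (ζ : ℕ → ℕ) {j i : ℕ} (h : i < j) :
    (prefixWord ζ j)[i]'(by simp [prefixWord_length]; exact h) = ζ i := by
  simp [prefixWord]

lemma prefixWord_succ (ζ : ℕ → ℕ) (j : ℕ) :
    prefixWord ζ (j + 1) = prefixWord ζ j ++ [ζ j] := by
  simp only [prefixWord, List.ofFn_succ']
  simp [List.concat_eq_append]

end TreeAux

/-! ### Measurability helpers -/

section MeasAux
variable {Ω : Type} [MeasurableSpace Ω] {m : ℕ → ℕ} {X : List ℕ → Ω → Bool}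
set_option linter.unusedSectionVars false

/-- The σ-algebra generated by generations `≤ j`. -/
def Fsig (m : ℕ → ℕ) (X : List ℕ → Ω → Bool) (j : ℕ) : MeasurableSpace Ω :=
  ⨆ v ∈ {v : List ℕ | TreeValid m v ∧ v.length ≤ j}, MeasurableSpace.comap (X v) ⊤

lemma comap_le_ambient {v : List ℕ} (hX : Measurable (X v)) :
    MeasurableSpace.comap (X v) ⊤ ≤ ‹MeasurableSpace Ω› := by
  rintro s ⟨t, -, rfl⟩
  exact hX (by trivial)

lemma pastSigma_le (hX : ∀ v, Measurable (X v)) (u : List ℕ) :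
    pastSigma m X u ≤ ‹MeasurableSpace Ω› :=
  iSup₂_le fun v _ => comap_le_ambient (hX v)

lemma Fsig_le (hX : ∀ v, Measurable (X v)) (j : ℕ) :
    Fsig m X j ≤ ‹MeasurableSpace Ω› :=
  iSup₂_le fun v _ => comap_le_ambient (hX v)

lemma comap_le_Fsig {j : ℕ} {v : List ℕ} (hv : TreeValid m v) (hl : v.length ≤ j) :
    MeasurableSpace.comap (X v) ⊤ ≤ Fsig m X j := by
  have hv' : v ∈ {v : List ℕ | TreeValid m v ∧ v.length ≤ j} := ⟨hv, hl⟩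
  exact (show MeasurableSpace.comap (X v) ⊤ ≤
      ⨆ w ∈ {v : List ℕ | TreeValid m v ∧ v.length ≤ j}, MeasurableSpace.comap (X w) ⊤ from
    le_iSup₂ (f := fun w _ => MeasurableSpace.comap (X w) ⊤) v hv')

lemma comap_le_past {u v : List ℕ} (hv : TreeValid m v) (hnd : ¬(u <+: v ∧ u ≠ v)) :
    MeasurableSpace.comap (X v) ⊤ ≤ pastSigma m X u := by
  have hv' : v ∈ {v : List ℕ | TreeValid m v ∧ ¬(u <+: v ∧ u ≠ v)} := ⟨hv, hnd⟩
  exact (show MeasurableSpace.comap (X v) ⊤ ≤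
      ⨆ w ∈ {v : List ℕ | TreeValid m v ∧ ¬(u <+: v ∧ u ≠ v)}, MeasurableSpace.comap (X w) ⊤ from
    le_iSup₂ (f := fun w _ => MeasurableSpace.comap (X w) ⊤) v hv')

lemma Fsig_le_past {j : ℕ} {u : List ℕ} (hul : u.length = j) :
    Fsig m X j ≤ pastSigma m X u := by
  refine iSup₂_le fun v hv => comap_le_past hv.1 ?_
  rintro ⟨hpre, hne⟩
  have h1 : u.length ≤ v.length := hpre.length_le
  have h2 : v.length ≤ u.length := hul ▸ hv.2
  exact hne (hpre.eq_of_length (le_antisymm h1 h2))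

lemma Fsig_mono {j j' : ℕ} (h : j ≤ j') : Fsig m X j ≤ Fsig m X j' :=
  iSup₂_le fun v hv => comap_le_Fsig hv.1 (hv.2.trans h)

lemma measurable_bool {m' : MeasurableSpace Ω} {f : Ω → Bool}
    (h : MeasurableSet[m'] {ω | f ω = true}) : Measurable[m'] f := by
  intro t _
  have hfalse : f ⁻¹' {false} = {ω | f ω = true}ᶜ := by
    ext ω; cases hb : f ω <;> simp [hb]
  have htrue : f ⁻¹' {true} = {ω | f ω = true} := by ext ω; simp
  have ht : t = (if true ∈ t then {true} else ∅) ∪ (if false ∈ t then {false} else ∅) := by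
    ext b; cases b <;> by_cases h1 : true ∈ t <;> by_cases h2 : false ∈ t <;> simp [h1, h2]
  rw [ht, Set.preimage_union]
  apply MeasurableSet.union
  · split_ifs
    · rw [htrue]; exact h
    · simp
  · split_ifs
    · rw [hfalse]; exact h.compl
    · simp

lemma measurableSet_X_true {m' : MeasurableSpace Ω} {v : List ℕ}
    (h : MeasurableSpace.comap (X v) ⊤ ≤ m') : MeasurableSet[m'] {ω | X v ω = true} := by
  apply h
  refine ⟨{true}, trivial, ?_⟩
  ext ω; simp

lemma measurableSet_andX {m' : MeasurableSpace Ω} {e f : Ω → Bool}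
    (he : MeasurableSet[m'] {ω | e ω = true}) (hf : MeasurableSet[m'] {ω | f ω = true}) :
    MeasurableSet[m'] {ω | (e ω && f ω) = true} := by
  have : {ω | (e ω && f ω) = true} = {ω | e ω = true} ∩ {ω | f ω = true} := by
    ext ω; simp [Bool.and_eq_true]
  rw [this]; exact he.inter hf

lemma measurable_g_ch {m' : MeasurableSpace Ω} {u : List ℕ} {n : ℕ}
    (hX : ∀ k : Fin n, Measurable[m'] (X (u ++ [(k : ℕ)]))) (g : (Fin n → Bool) → ℝ) :
    Measurable[m'] fun ω => g fun k => X (u ++ [(k : ℕ)]) ω := by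
  have hch : Measurable[m'] fun ω => fun k : Fin n => X (u ++ [(k : ℕ)]) ω :=
    measurable_pi_lambda _ hX
  exact Measurable.of_discrete.comp hch

lemma measurable_X_of_comap {m' : MeasurableSpace Ω} {v : List ℕ}
    (h : MeasurableSpace.comap (X v) ⊤ ≤ m') : Measurable[m'] (X v) :=
  measurable_bool (measurableSet_X_true h)

lemma integrable_of_bounded {P : Measure Ω} [IsProbabilityMeasure P] {f : Ω → ℝ}
    (hf : Measurable f) {C : ℝ} (hb : ∀ ω, |f ω| ≤ C) : Integrable f P :=
  (integrable_const C).mono' hf.aestronglyMeasurable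
    (Filter.Eventually.of_forall fun ω => by simpa using hb ω)

end MeasAux
/-! ### The key conditioning lemma -/

section Cond
variable {Ω : Type} [MeasurableSpace Ω] {d : ℕ} {m : ℕ → ℕ} {βl βh : ℝ}
  {μ : ∀ j : ℕ, Measure (Fin (m j) → ℝ)} {ν : Bool → ∀ j : ℕ, Measure (Fin (m j) → Bool)}
  {P : Measure Ω} {J : List ℕ → Ω → Set (EuclideanSpace ℝ (Fin d))} {X : List ℕ → Ω → Bool}
set_option linter.unusedSectionVars false

lemma nu_singleton_le_one (h : Hyp d m βl βh μ ν P J X) (b : Bool) (j : ℕ)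
    (A : Set (Fin (m j) → Bool)) : ((ν b j) A).toReal ≤ 1 := by
  haveI := h.hν b j
  have h1 : ν b j A ≤ 1 := prob_le_one
  have := ENNReal.toReal_mono (by norm_num) h1
  simpa using this

lemma nu_singleton_nonneg (h : Hyp d m βl βh μ ν P J X) (b : Bool) (j : ℕ)
    (A : Set (Fin (m j) → Bool)) : 0 ≤ ((ν b j) A).toReal := ENNReal.toReal_nonneg

lemma AL (h : Hyp d m βl βh μ ν P J X) {u : List ℕ} (hu : TreeValid m u)
    (g : (Fin (m u.length) → Bool) → ℝ) (hg : ∀ y, |g y| ≤ 1)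
    (H : Ω → ℝ) (hH : StronglyMeasurable[pastSigma m X u] H) (hHb : ∀ ω, |H ω| ≤ 1) :
    ∫ ω, H ω * g (fun k : Fin (m u.length) => X (u ++ [(k : ℕ)]) ω) ∂P
      = ∫ ω, H ω * ∫ y, g y ∂(ν (X u ω) u.length) ∂P := by
  haveI := h.hP
  have hm : pastSigma m X u ≤ ‹MeasurableSpace Ω› := pastSigma_le h.hXmeas u
  haveI : SigmaFinite (P.trim hm) := inferInstance
  have hchmeas : Measurable (fun ω => fun k : Fin (m u.length) => X (u ++ [(k : ℕ)]) ω) :=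
    measurable_pi_lambda _ fun k => h.hXmeas _
  have hHm : StronglyMeasurable H := hH.mono hm
  have hnumeas : ∀ a : Fin (m u.length) → Bool,
      Measurable (fun ω => ((ν (X u ω) u.length) {a}).toReal) := fun a =>
    (Measurable.of_discrete (f := fun b : Bool => ((ν b u.length) {a}).toReal)).comp (h.hXmeas u)
  -- Step 1: the identity for indicators of singletons
  have key : ∀ a : Fin (m u.length) → Bool,
      ∫ ω, H ω * (if (fun k : Fin (m u.length) => X (u ++ [(k : ℕ)]) ω) = a then (1:ℝ) else 0) ∂P
        = ∫ ω, H ω * ((ν (X u ω) u.length) {a}).toReal ∂P := by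
    intro a
    have hmA : MeasurableSet ({a} : Set (Fin (m u.length) → Bool)) := measurableSet_singleton a
    have hfeq : (Set.indicator
          {ω : Ω | (fun k : Fin (m u.length) => X (u ++ [(k : ℕ)]) ω) ∈ ({a} : Set _)}
          (fun _ => (1:ℝ)))
        = fun ω => if (fun k : Fin (m u.length) => X (u ++ [(k : ℕ)]) ω) = a then (1:ℝ) else 0 := by
      funext ω; simp [Set.indicator_apply]
    have hfmeas : Measurable (fun ω =>
        if (fun k : Fin (m u.length) => X (u ++ [(k : ℕ)]) ω) = a then (1:ℝ) else 0) :=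
      Measurable.ite (hchmeas hmA) measurable_const measurable_const
    have hfint : Integrable (fun ω =>
        if (fun k : Fin (m u.length) => X (u ++ [(k : ℕ)]) ω) = a then (1:ℝ) else 0) P :=
      integrable_of_bounded hfmeas (C := 1) (fun ω => by split_ifs <;> norm_num)
    have hHfint : Integrable (H * fun ω =>
        if (fun k : Fin (m u.length) => X (u ++ [(k : ℕ)]) ω) = a then (1:ℝ) else 0) P := by
      refine integrable_of_bounded (hHm.measurable.mul hfmeas) (C := 1) fun ω => ?_
      rw [Pi.mul_apply, abs_mul]
      calc |H ω| * |if (fun k : Fin (m u.length) => X (u ++ [(k : ℕ)]) ω) = a then (1:ℝ) else 0|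
          ≤ 1 * 1 := by
            apply mul_le_mul (hHb ω) _ (abs_nonneg _) (by norm_num)
            split_ifs <;> norm_num
        _ = 1 := by norm_num
    have h1 := condExp_mul_of_stronglyMeasurable_left (μ := P) hH hHfint hfint
    have h2 := h.hMarkov u hu {a} hmA
    calc ∫ ω, H ω * (if (fun k : Fin (m u.length) => X (u ++ [(k : ℕ)]) ω) = a then (1:ℝ) else 0) ∂P
        = ∫ ω, (H * Set.indicator
            {ω : Ω | (fun k : Fin (m u.length) => X (u ++ [(k : ℕ)]) ω) ∈ ({a} : Set _)}
            (fun _ => (1:ℝ))) ω ∂P := by rw [hfeq]; rfl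
      _ = ∫ ω, (P[(H * Set.indicator
            {ω : Ω | (fun k : Fin (m u.length) => X (u ++ [(k : ℕ)]) ω) ∈ ({a} : Set _)}
            (fun _ => (1:ℝ))) | pastSigma m X u]) ω ∂P := (integral_condExp hm).symm
      _ = ∫ ω, H ω * ((ν (X u ω) u.length) {a}).toReal ∂P := by
          apply integral_congr_ae
          rw [hfeq] at h2
          rw [hfeq]
          filter_upwards [h1, h2] with ω hω1 hω2
          rw [hω1, Pi.mul_apply, hω2]
  -- Step 2: decompose g as a finite combination of indicators
  have hsum : ∀ ω : Ω, g (fun k : Fin (m u.length) => X (u ++ [(k : ℕ)]) ω)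
      = ∑ a : Fin (m u.length) → Bool,
          (if (fun k : Fin (m u.length) => X (u ++ [(k : ℕ)]) ω) = a then (1:ℝ) else 0) * g a := by
    intro ω
    simp [ite_mul, Finset.sum_ite_eq]
  have hpt : ∀ b : Bool, ∫ y, g y ∂(ν b u.length)
      = ∑ a : Fin (m u.length) → Bool, ((ν b u.length) {a}).toReal * g a := by
    intro b
    haveI := h.hν b u.length
    rw [integral_fintype (Integrable.of_finite)]
    simp only [smul_eq_mul, measureReal_def]
  have intL : ∀ a : Fin (m u.length) → Bool, Integrable (fun ω =>
      (H ω * (if (fun k : Fin (m u.length) => X (u ++ [(k : ℕ)]) ω) = a then (1:ℝ) else 0)) * g a) P := by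
    intro a
    have hfmeas : Measurable (fun ω =>
        if (fun k : Fin (m u.length) => X (u ++ [(k : ℕ)]) ω) = a then (1:ℝ) else 0) :=
      Measurable.ite (hchmeas (measurableSet_singleton a)) measurable_const measurable_const
    refine integrable_of_bounded ((hHm.measurable.mul hfmeas).mul_const _) (C := 1) fun ω => ?_
    rw [abs_mul, abs_mul]
    have h1 : |H ω| ≤ 1 := hHb ω
    have h2 : |if (fun k : Fin (m u.length) => X (u ++ [(k : ℕ)]) ω) = a then (1:ℝ) else 0| ≤ 1 := by
      split_ifs <;> norm_num
    have h3 : |g a| ≤ 1 := hg a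
    exact mul_le_one₀ (mul_le_one₀ h1 (abs_nonneg _) h2) (abs_nonneg _) h3
  have intR : ∀ a : Fin (m u.length) → Bool, Integrable (fun ω =>
      (H ω * ((ν (X u ω) u.length) {a}).toReal) * g a) P := by
    intro a
    refine integrable_of_bounded ((hHm.measurable.mul (hnumeas a)).mul_const _) (C := 1) fun ω => ?_
    rw [abs_mul, abs_mul]
    have h1 : |H ω| ≤ 1 := hHb ω
    have h2 : |((ν (X u ω) u.length) {a}).toReal| ≤ 1 := by
      rw [abs_of_nonneg (nu_singleton_nonneg h _ _ _)]
      exact nu_singleton_le_one h _ _ _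
    have h3 : |g a| ≤ 1 := hg a
    exact mul_le_one₀ (mul_le_one₀ h1 (abs_nonneg _) h2) (abs_nonneg _) h3
  calc ∫ ω, H ω * g (fun k : Fin (m u.length) => X (u ++ [(k : ℕ)]) ω) ∂P
      = ∫ ω, ∑ a : Fin (m u.length) → Bool,
          (H ω * (if (fun k : Fin (m u.length) => X (u ++ [(k : ℕ)]) ω) = a then (1:ℝ) else 0)) * g a ∂P := by
        apply integral_congr_ae
        apply Filter.Eventually.of_forall
        intro ω
        dsimp only
        rw [hsum ω, Finset.mul_sum]
        exact Finset.sum_congr rfl fun a _ => by ring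
    _ = ∑ a : Fin (m u.length) → Bool, ∫ ω,
          (H ω * (if (fun k : Fin (m u.length) => X (u ++ [(k : ℕ)]) ω) = a then (1:ℝ) else 0)) * g a ∂P :=
        integral_finset_sum _ fun a _ => intL a
    _ = ∑ a : Fin (m u.length) → Bool, ∫ ω,
          (H ω * ((ν (X u ω) u.length) {a}).toReal) * g a ∂P := by
        refine Finset.sum_congr rfl fun a _ => ?_
        rw [integral_mul_const, integral_mul_const, key a]
    _ = ∫ ω, ∑ a : Fin (m u.length) → Bool,
          (H ω * ((ν (X u ω) u.length) {a}).toReal) * g a ∂P :=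
        (integral_finset_sum _ fun a _ => intR a).symm
    _ = ∫ ω, H ω * ∫ y, g y ∂(ν (X u ω) u.length) ∂P := by
        apply integral_congr_ae
        apply Filter.Eventually.of_forall
        intro ω
        dsimp only
        rw [hpt (X u ω), Finset.mul_sum]
        exact Finset.sum_congr rfl fun a _ => by ring

end Cond
lemma abs_integral_le_one {α : Type*} [MeasurableSpace α] {Q : Measure α} [IsProbabilityMeasure Q]
    {g : α → ℝ} (hg : ∀ y, |g y| ≤ 1) : |∫ y, g y ∂Q| ≤ 1 := by
  have := norm_integral_le_of_norm_le_const (f := g) (μ := Q) (C := 1)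
    (Filter.Eventually.of_forall fun y => by simpa using hg y)
  simpa using this

section Cond2
variable {Ω : Type} [MeasurableSpace Ω] {d : ℕ} {m : ℕ → ℕ} {βl βh : ℝ}
  {μ : ∀ j : ℕ, Measure (Fin (m j) → ℝ)} {ν : Bool → ∀ j : ℕ, Measure (Fin (m j) → Bool)}
  {P : Measure Ω} {J : List ℕ → Ω → Set (EuclideanSpace ℝ (Fin d))} {X : List ℕ → Ω → Bool}
set_option linter.unusedSectionVars false

lemma AL' (h : Hyp d m βl βh μ ν P J X) {j : ℕ} {u : List ℕ} (hu : TreeValid m u)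
    (hul : u.length = j) (g : (Fin (m j) → Bool) → ℝ) (hg : ∀ y, |g y| ≤ 1)
    (H : Ω → ℝ) (hH : StronglyMeasurable[pastSigma m X u] H) (hHb : ∀ ω, |H ω| ≤ 1) :
    ∫ ω, H ω * g (fun k : Fin (m j) => X (u ++ [(k : ℕ)]) ω) ∂P
      = ∫ ω, H ω * ∫ y, g y ∂(ν (X u ω) j) ∂P := by
  subst hul
  exact AL h hu g hg H hH hHb

lemma CL (h : Hyp d m βl βh μ ν P J X) (j : ℕ)
    (e : List ℕ → Ω → Bool)
    (he : ∀ u ∈ treeWords m j, MeasurableSet[Fsig m X j] {ω | e u ω = true})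
    (g : List ℕ → (Fin (m j) → Bool) → ℝ) (hg : ∀ u y, |g u y| ≤ 1)
    (S : Finset (List ℕ)) (hS : S ⊆ treeWords m j)
    (H : Ω → ℝ) (hH : StronglyMeasurable[Fsig m X j] H) (hHb : ∀ ω, |H ω| ≤ 1) :
    ∫ ω, H ω * ∏ u ∈ S, (if (e u ω && X u ω) = true
        then g u (fun k : Fin (m j) => X (u ++ [(k : ℕ)]) ω) else 1) ∂P
      = ∫ ω, H ω * ∏ u ∈ S, (if (e u ω && X u ω) = true
        then ∫ y, g u y ∂(ν true j) else 1) ∂P := by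
  haveI := h.hP
  haveI := h.hν true j
  have hamb : Fsig m X j ≤ ‹MeasurableSpace Ω› := Fsig_le h.hXmeas j
  induction S using Finset.induction_on generalizing H hH hHb with
  | empty => simp
  | @insert u S hu ih =>
    have hutw : u ∈ treeWords m j := hS (Finset.mem_insert_self u S)
    obtain ⟨huv, hul⟩ := mem_treeWords.1 hutw
    have hS' : S ⊆ treeWords m j := fun v hv => hS (Finset.mem_insert_of_mem hv)
    have hpast : Fsig m X j ≤ pastSigma m X u := Fsig_le_past hul
    have hpamb : pastSigma m X u ≤ ‹MeasurableSpace Ω› := pastSigma_le h.hXmeas u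
    have hvfacts : ∀ v ∈ S, TreeValid m v ∧ v.length = j ∧ v ≠ u := by
      intro v hv
      obtain ⟨h1, h2⟩ := mem_treeWords.1 (hS' hv)
      exact ⟨h1, h2, fun hvu => hu (hvu ▸ hv)⟩
    -- measurability of the factors with respect to `pastSigma u`
    have hWpast : ∀ v ∈ S, Measurable[pastSigma m X u] fun ω =>
        (if (e v ω && X v ω) = true
          then g v (fun k : Fin (m j) => X (v ++ [(k : ℕ)]) ω) else 1 : ℝ) := by
      intro v hv
      obtain ⟨hvv, hvl, hvu⟩ := hvfacts v hv
      have hndv : ¬(u <+: v ∧ u ≠ v) := by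
        rintro ⟨hp, hne⟩
        exact hne (hp.eq_of_length (by omega))
      have hcond : MeasurableSet[pastSigma m X u] {ω | (e v ω && X v ω) = true} :=
        measurableSet_andX (hpast _ (he v (hS' hv)))
          (measurableSet_X_true (comap_le_past hvv hndv))
      have hgch : Measurable[pastSigma m X u]
          fun ω => g v (fun k : Fin (m j) => X (v ++ [(k : ℕ)]) ω) := by
        apply measurable_g_ch
        intro k
        have hvalid : TreeValid m (v ++ [(k : ℕ)]) :=
          treeValid_append_iff.2 ⟨hvv, by rw [hvl]; exact k.2⟩
        have hnd : ¬(u <+: v ++ [(k : ℕ)] ∧ u ≠ v ++ [(k : ℕ)]) := by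
          rintro ⟨hp, -⟩
          have h1 : u = (v ++ [(k : ℕ)]).take j := by
            rw [List.prefix_iff_eq_take.1 hp, hul]
          rw [List.take_append_of_le_length (le_of_eq hvl.symm),
            List.take_of_length_le (le_of_eq hvl)] at h1
          exact hvu h1.symm
        exact measurable_X_of_comap (comap_le_past hvalid hnd)
      exact Measurable.ite hcond hgch measurable_const
    have hcondu : MeasurableSet[pastSigma m X u] {ω | (e u ω && X u ω) = true} :=
      measurableSet_andX (hpast _ (he u hutw))
        (measurableSet_X_true (comap_le_past huv (by rintro ⟨-, hne⟩; exact hne rfl)))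
    -- ambient measurability of all factors
    have hWamb : ∀ v ∈ treeWords m j, Measurable fun ω =>
        (if (e v ω && X v ω) = true
          then g v (fun k : Fin (m j) => X (v ++ [(k : ℕ)]) ω) else 1 : ℝ) := by
      intro v hv
      have hcond : MeasurableSet {ω | (e v ω && X v ω) = true} :=
        measurableSet_andX (hamb _ (he v hv))
          (measurableSet_X_true (comap_le_ambient (h.hXmeas v)))
      exact Measurable.ite hcond (measurable_g_ch (fun k => h.hXmeas _) _) measurable_const
    -- bounds
    have hWb : ∀ (v : List ℕ) (ω : Ω), |(if (e v ω && X v ω) = true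
        then g v (fun k : Fin (m j) => X (v ++ [(k : ℕ)]) ω) else 1 : ℝ)| ≤ 1 := by
      intro v ω; split_ifs
      · exact hg v _
      · norm_num
    have hprodWb : ∀ ω : Ω, |∏ v ∈ S, (if (e v ω && X v ω) = true
        then g v (fun k : Fin (m j) => X (v ++ [(k : ℕ)]) ω) else 1 : ℝ)| ≤ 1 := by
      intro ω
      rw [Finset.abs_prod]
      exact Finset.prod_le_one (fun v _ => abs_nonneg _) (fun v _ => hWb v ω)
    have hprodWpast : Measurable[pastSigma m X u] fun ω => ∏ v ∈ S,
        (if (e v ω && X v ω) = true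
          then g v (fun k : Fin (m j) => X (v ++ [(k : ℕ)]) ω) else 1 : ℝ) :=
      Finset.measurable_prod _ hWpast
    have hprodWamb : Measurable fun ω => ∏ v ∈ S,
        (if (e v ω && X v ω) = true
          then g v (fun k : Fin (m j) => X (v ++ [(k : ℕ)]) ω) else 1 : ℝ) :=
      Finset.measurable_prod _ fun v hv => hWamb v (hS' hv)
    have hconduF : MeasurableSet[Fsig m X j] {ω | (e u ω && X u ω) = true} :=
      measurableSet_andX (he u hutw)
        (measurableSet_X_true (comap_le_Fsig huv (le_of_eq hul)))
    have hconduA : MeasurableSet {ω | (e u ω && X u ω) = true} := hamb _ hconduF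
    have hHamb : Measurable H := hH.measurable.mono hamb le_rfl
    have hA : Measurable fun ω => H ω * ∏ v ∈ S, (if (e v ω && X v ω) = true
        then g v (fun k : Fin (m j) => X (v ++ [(k : ℕ)]) ω) else 1 : ℝ) :=
      hHamb.mul hprodWamb
    have hAb : ∀ ω : Ω, |H ω * ∏ v ∈ S, (if (e v ω && X v ω) = true
        then g v (fun k : Fin (m j) => X (v ++ [(k : ℕ)]) ω) else 1 : ℝ)| ≤ 1 := fun ω => by
      rw [abs_mul]
      exact mul_le_one₀ (hHb ω) (abs_nonneg _) (hprodWb ω)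
    have hgchamb : Measurable fun ω => g u (fun k : Fin (m j) => X (u ++ [(k : ℕ)]) ω) :=
      measurable_g_ch (fun k => h.hXmeas _) _
    have hindamb : Measurable fun ω => (if (e u ω && X u ω) = true then (1:ℝ) else 0) :=
      Measurable.ite hconduA measurable_const measurable_const
    have hind0amb : Measurable fun ω => (if (e u ω && X u ω) = true then (0:ℝ) else 1) :=
      Measurable.ite hconduA measurable_const measurable_const
    have hnuint : Measurable fun ω => ∫ y, g u y ∂(ν (X u ω) j) :=
      (Measurable.of_discrete (f := fun b : Bool => ∫ y, g u y ∂(ν b j))).comp (h.hXmeas u)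
    -- the four integrable auxiliary functions
    have int1 : Integrable (fun ω => (H ω * ∏ v ∈ S, (if (e v ω && X v ω) = true
        then g v (fun k : Fin (m j) => X (v ++ [(k : ℕ)]) ω) else 1 : ℝ))
          * (if (e u ω && X u ω) = true then (0:ℝ) else 1)) P := by
      refine integrable_of_bounded (hA.mul hind0amb) (C := 1) fun ω => ?_
      rw [abs_mul]
      refine mul_le_one₀ (hAb ω) (abs_nonneg _) ?_
      split_ifs <;> norm_num
    have int2 : Integrable (fun ω => ((H ω * ∏ v ∈ S, (if (e v ω && X v ω) = true
        then g v (fun k : Fin (m j) => X (v ++ [(k : ℕ)]) ω) else 1 : ℝ))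
          * (if (e u ω && X u ω) = true then (1:ℝ) else 0))
          * g u (fun k : Fin (m j) => X (u ++ [(k : ℕ)]) ω)) P := by
      refine integrable_of_bounded ((hA.mul hindamb).mul hgchamb) (C := 1) fun ω => ?_
      rw [abs_mul, abs_mul]
      refine mul_le_one₀ (mul_le_one₀ (hAb ω) (abs_nonneg _) ?_) (abs_nonneg _) (hg u _)
      split_ifs <;> norm_num
    have int3 : Integrable (fun ω => (H ω * ∏ v ∈ S, (if (e v ω && X v ω) = true
        then g v (fun k : Fin (m j) => X (v ++ [(k : ℕ)]) ω) else 1 : ℝ))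
          * (if (e u ω && X u ω) = true then (∫ y, g u y ∂(ν true j)) else 0)) P := by
      have hm2 : Measurable fun ω => (if (e u ω && X u ω) = true
          then (∫ y, g u y ∂(ν true j)) else (0:ℝ)) :=
        Measurable.ite hconduA measurable_const measurable_const
      refine integrable_of_bounded (hA.mul hm2) (C := 1) fun ω => ?_
      rw [abs_mul]
      refine mul_le_one₀ (hAb ω) (abs_nonneg _) ?_
      split_ifs
      · exact abs_integral_le_one (hg u)
      · norm_num
    -- strong measurability for the pull-out step
    have hH2 : StronglyMeasurable[pastSigma m X u] fun ω =>
        (H ω * ∏ v ∈ S, (if (e v ω && X v ω) = true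
          then g v (fun k : Fin (m j) => X (v ++ [(k : ℕ)]) ω) else 1 : ℝ))
          * (if (e u ω && X u ω) = true then (1:ℝ) else 0) :=
      Measurable.stronglyMeasurable
        (Measurable.mul (Measurable.mul ((hH.mono hpast).measurable) hprodWpast)
          (Measurable.ite hcondu measurable_const measurable_const))
    have hH2b : ∀ ω : Ω, |(H ω * ∏ v ∈ S, (if (e v ω && X v ω) = true
        then g v (fun k : Fin (m j) => X (v ++ [(k : ℕ)]) ω) else 1 : ℝ))
          * (if (e u ω && X u ω) = true then (1:ℝ) else 0)| ≤ 1 := fun ω => by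
      rw [abs_mul]
      refine mul_le_one₀ (hAb ω) (abs_nonneg _) ?_
      split_ifs <;> norm_num
    simp only [Finset.prod_insert hu]
    calc ∫ ω, H ω * ((if (e u ω && X u ω) = true
            then g u (fun k : Fin (m j) => X (u ++ [(k : ℕ)]) ω) else 1)
          * ∏ v ∈ S, (if (e v ω && X v ω) = true
            then g v (fun k : Fin (m j) => X (v ++ [(k : ℕ)]) ω) else 1)) ∂P
        = ∫ ω, ((H ω * ∏ v ∈ S, (if (e v ω && X v ω) = true
              then g v (fun k : Fin (m j) => X (v ++ [(k : ℕ)]) ω) else 1))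
            * (if (e u ω && X u ω) = true then (0:ℝ) else 1)
          + ((H ω * ∏ v ∈ S, (if (e v ω && X v ω) = true
              then g v (fun k : Fin (m j) => X (v ++ [(k : ℕ)]) ω) else 1))
            * (if (e u ω && X u ω) = true then (1:ℝ) else 0))
            * g u (fun k : Fin (m j) => X (u ++ [(k : ℕ)]) ω)) ∂P := by
          apply integral_congr_ae
          apply Filter.Eventually.of_forall
          intro ω
          dsimp only
          split_ifs <;> ring
      _ = (∫ ω, (H ω * ∏ v ∈ S, (if (e v ω && X v ω) = true
              then g v (fun k : Fin (m j) => X (v ++ [(k : ℕ)]) ω) else 1))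
            * (if (e u ω && X u ω) = true then (0:ℝ) else 1) ∂P)
          + ∫ ω, ((H ω * ∏ v ∈ S, (if (e v ω && X v ω) = true
              then g v (fun k : Fin (m j) => X (v ++ [(k : ℕ)]) ω) else 1))
            * (if (e u ω && X u ω) = true then (1:ℝ) else 0))
            * g u (fun k : Fin (m j) => X (u ++ [(k : ℕ)]) ω) ∂P :=
          integral_add int1 int2
      _ = (∫ ω, (H ω * ∏ v ∈ S, (if (e v ω && X v ω) = true
              then g v (fun k : Fin (m j) => X (v ++ [(k : ℕ)]) ω) else 1))
            * (if (e u ω && X u ω) = true then (0:ℝ) else 1) ∂P)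
          + ∫ ω, ((H ω * ∏ v ∈ S, (if (e v ω && X v ω) = true
              then g v (fun k : Fin (m j) => X (v ++ [(k : ℕ)]) ω) else 1))
            * (if (e u ω && X u ω) = true then (1:ℝ) else 0))
            * ∫ y, g u y ∂(ν (X u ω) j) ∂P := by
          congr 1
          exact AL' h huv hul (g u) (hg u) _ hH2 hH2b
      _ = (∫ ω, (H ω * ∏ v ∈ S, (if (e v ω && X v ω) = true
              then g v (fun k : Fin (m j) => X (v ++ [(k : ℕ)]) ω) else 1))
            * (if (e u ω && X u ω) = true then (0:ℝ) else 1) ∂P)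
          + ∫ ω, (H ω * ∏ v ∈ S, (if (e v ω && X v ω) = true
              then g v (fun k : Fin (m j) => X (v ++ [(k : ℕ)]) ω) else 1))
            * (if (e u ω && X u ω) = true then (∫ y, g u y ∂(ν true j)) else 0) ∂P := by
          congr 1
          apply integral_congr_ae
          apply Filter.Eventually.of_forall
          intro ω
          dsimp only
          by_cases hb : (e u ω && X u ω) = true
          · have hb' := hb
            rw [Bool.and_eq_true] at hb'
            have hXu : X u ω = true := hb'.2
            rw [if_pos hb, if_pos hb, hXu]
            ring
          · rw [if_neg hb, if_neg hb]
            ring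
      _ = ∫ ω, (H ω * (if (e u ω && X u ω) = true
              then (∫ y, g u y ∂(ν true j)) else 1))
            * ∏ v ∈ S, (if (e v ω && X v ω) = true
              then g v (fun k : Fin (m j) => X (v ++ [(k : ℕ)]) ω) else 1) ∂P := by
          rw [← integral_add int1 int3]
          apply integral_congr_ae
          apply Filter.Eventually.of_forall
          intro ω
          dsimp only
          split_ifs <;> ring
      _ = ∫ ω, (H ω * (if (e u ω && X u ω) = true
              then (∫ y, g u y ∂(ν true j)) else 1))
            * ∏ v ∈ S, (if (e v ω && X v ω) = true
              then ∫ y, g v y ∂(ν true j) else 1) ∂P := by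
          apply ih hS'
          · exact hH.mul (Measurable.stronglyMeasurable
              (Measurable.ite hconduF measurable_const measurable_const))
          · intro ω
            rw [abs_mul]
            refine mul_le_one₀ (hHb ω) (abs_nonneg _) ?_
            split_ifs
            · exact abs_integral_le_one (hg u)
            · norm_num
      _ = ∫ ω, H ω * ((if (e u ω && X u ω) = true
              then ∫ y, g u y ∂(ν true j) else 1)
            * ∏ v ∈ S, (if (e v ω && X v ω) = true
              then ∫ y, g v y ∂(ν true j) else 1)) ∂P := by
          apply integral_congr_ae
          apply Filter.Eventually.of_forall
          intro ω
          dsimp only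
          ring


end Cond2
/-! ### Death indicators and events -/

section Dead
variable {Ω : Type} [MeasurableSpace Ω]

/-- Indicator that there is no `1`-chain of length `n+1` strictly below `u`. -/
def DeadI (m : ℕ → ℕ) (X : List ℕ → Ω → Bool) : ℕ → List ℕ → Ω → ℝ
  | 0, u, ω => ∏ k ∈ Finset.range (m u.length), (if X (u ++ [k]) ω = true then (0:ℝ) else 1)
  | n + 1, u, ω => ∏ k ∈ Finset.range (m u.length),
      (if X (u ++ [k]) ω = true then DeadI m X n (u ++ [k]) ω else 1)

/-- The corresponding event. -/
def DeadP (m : ℕ → ℕ) (X : List ℕ → Ω → Bool) : ℕ → List ℕ → Ω → Prop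
  | 0, u, ω => ∀ k, k < m u.length → X (u ++ [k]) ω = false
  | n + 1, u, ω => ∀ k, k < m u.length → X (u ++ [k]) ω = true → DeadP m X n (u ++ [k]) ω

variable {m : ℕ → ℕ} {X : List ℕ → Ω → Bool}

lemma DeadI_eq (n : ℕ) : ∀ (u : List ℕ) (ω : Ω),
    DeadI m X n u ω = if DeadP m X n u ω then 1 else 0 := by
  induction n with
  | zero =>
    intro u ω
    by_cases hd : DeadP m X 0 u ω
    · rw [if_pos hd]
      apply Finset.prod_eq_one
      intro k hk
      rw [hd k (Finset.mem_range.1 hk), if_neg (by simp)]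
    · rw [if_neg hd]
      simp only [DeadP, not_forall] at hd
      obtain ⟨k, hk, hX⟩ := hd
      apply Finset.prod_eq_zero (Finset.mem_range.2 hk)
      rw [if_pos (by simp [Bool.not_eq_false] at hX; exact hX)]
  | succ n ih =>
    intro u ω
    by_cases hd : DeadP m X (n + 1) u ω
    · rw [if_pos hd]
      apply Finset.prod_eq_one
      intro k hk
      by_cases hX : X (u ++ [k]) ω = true
      · rw [if_pos hX, ih, if_pos (hd k (Finset.mem_range.1 hk) hX)]
      · rw [if_neg hX]
    · rw [if_neg hd]
      simp only [DeadP, not_forall] at hd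
      obtain ⟨k, hk, hX, hnd⟩ := hd
      apply Finset.prod_eq_zero (Finset.mem_range.2 hk)
      rw [if_pos hX, ih, if_neg hnd]

lemma DeadI_abs_le_one (n : ℕ) (u : List ℕ) (ω : Ω) : |DeadI m X n u ω| ≤ 1 := by
  rw [DeadI_eq]; split_ifs <;> norm_num

lemma DeadP_succ_of (n : ℕ) : ∀ (u : List ℕ) (ω : Ω),
    DeadP m X n u ω → DeadP m X (n + 1) u ω := by
  induction n with
  | zero =>
    intro u ω h k hk hX
    rw [h k hk] at hX
    cases hX
  | succ n ih =>
    intro u ω h k hk hX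
    exact ih _ _ (h k hk hX)

lemma DeadP_mono {n n' : ℕ} (hnn : n ≤ n') (u : List ℕ) (ω : Ω)
    (h : DeadP m X n u ω) : DeadP m X n' u ω := by
  induction n' with
  | zero => rwa [Nat.le_zero.1 hnn] at h
  | succ n' ih =>
    rcases Nat.lt_or_ge n (n' + 1) with h1 | h1
    · exact DeadP_succ_of n' u ω (ih (by omega))
    · rwa [show n = n' + 1 by omega] at h

lemma measurableSet_X_eq (hX : ∀ v, Measurable (X v)) (v : List ℕ) (b : Bool) :
    MeasurableSet {ω | X v ω = b} := by
  have : {ω | X v ω = b} = X v ⁻¹' {b} := by ext ω; simp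
  rw [this]
  exact hX v (by trivial)

lemma measurableSet_DeadP (hX : ∀ v, Measurable (X v)) (n : ℕ) : ∀ u : List ℕ,
    MeasurableSet {ω | DeadP m X n u ω} := by
  induction n with
  | zero =>
    intro u
    have : {ω | DeadP m X 0 u ω}
        = ⋂ (k : ℕ), ⋂ (_ : k < m u.length), {ω | X (u ++ [k]) ω = false} := by
      ext ω; simp [DeadP]
    rw [this]
    exact MeasurableSet.iInter fun k => MeasurableSet.iInter fun hk =>
      measurableSet_X_eq hX _ false
  | succ n ih =>
    intro u
    have : {ω | DeadP m X (n + 1) u ω}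
        = ⋂ (k : ℕ), ⋂ (_ : k < m u.length),
            ({ω | X (u ++ [k]) ω = true}ᶜ ∪ {ω | DeadP m X n (u ++ [k]) ω}) := by
      ext ω
      simp only [DeadP, Set.mem_setOf_eq, Set.mem_iInter, Set.mem_union, Set.mem_compl_iff]
      constructor
      · intro h k hk
        by_cases hXk : X (u ++ [k]) ω = true
        · exact Or.inr (h k hk hXk)
        · exact Or.inl hXk
      · intro h k hk hXk
        rcases h k hk with h1 | h1
        · exact absurd hXk h1
        · exact h1
    rw [this]
    exact MeasurableSet.iInter fun k => MeasurableSet.iInter fun hk =>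
      ((measurableSet_X_eq hX _ true).compl).union (ih _)

end Dead

/-! ### Analytic facts about the generating functions -/

section Phi
variable {Ω : Type} [MeasurableSpace Ω] {d : ℕ} {m : ℕ → ℕ} {βl βh : ℝ}
  {μ : ∀ j : ℕ, Measure (Fin (m j) → ℝ)} {ν : Bool → ∀ j : ℕ, Measure (Fin (m j) → Bool)}
  {P : Measure Ω} {J : List ℕ → Ω → Set (EuclideanSpace ℝ (Fin d))} {X : List ℕ → Ω → Bool}
set_option linter.unusedSectionVars false

lemma phiFn_nonneg (h : Hyp d m βl βh μ ν P J X) (t : Bool) (j : ℕ) {z : ℝ} (hz : 0 ≤ z) :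
    0 ≤ phiFn m ν t j z :=
  integral_nonneg fun y => pow_nonneg hz _

lemma phiFn_le_one (h : Hyp d m βl βh μ ν P J X) (t : Bool) (j : ℕ) {z : ℝ}
    (h0 : 0 ≤ z) (h1 : z ≤ 1) : phiFn m ν t j z ≤ 1 := by
  haveI := h.hν t j
  calc phiFn m ν t j z
      ≤ ∫ _, (1:ℝ) ∂ν t j :=
        integral_mono Integrable.of_finite Integrable.of_finite
          (fun y => pow_le_one₀ h0 h1)
    _ = 1 := by simp

lemma phiFn_mono (h : Hyp d m βl βh μ ν P J X) (t : Bool) (j : ℕ) {z1 z2 : ℝ}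
    (h0 : 0 ≤ z1) (h12 : z1 ≤ z2) : phiFn m ν t j z1 ≤ phiFn m ν t j z2 := by
  haveI := h.hν t j
  exact integral_mono Integrable.of_finite Integrable.of_finite
    (fun y => pow_le_pow_left₀ h0 h12 _)

lemma phiComp_bounds (h : Hyp d m βl βh μ ν P J X) :
    ∀ n j, 0 ≤ phiComp m ν j n 0 ∧ phiComp m ν j n 0 ≤ 1 := by
  intro n
  induction n with
  | zero =>
    intro j
    exact ⟨phiFn_nonneg h true j le_rfl, phiFn_le_one h true j le_rfl zero_le_one⟩
  | succ n ih =>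
    intro j
    constructor
    · exact phiFn_nonneg h true j (ih (j + 1)).1
    · exact phiFn_le_one h true j (ih (j + 1)).1 (ih (j + 1)).2

lemma phiComp_succ_le (h : Hyp d m βl βh μ ν P J X) :
    ∀ n j, phiComp m ν j n 0 ≤ phiComp m ν j (n + 1) 0 := by
  intro n
  induction n with
  | zero =>
    intro j
    exact phiFn_mono h true j le_rfl (phiComp_bounds h 0 (j + 1)).1
  | succ n ih =>
    intro j
    exact phiFn_mono h true j (phiComp_bounds h n (j + 1)).1 (ih (j + 1))

lemma phiComp_mono_n (h : Hyp d m βl βh μ ν P J X) (j : ℕ) :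
    Monotone fun n => phiComp m ν j n 0 :=
  monotone_nat_of_le_succ fun n => phiComp_succ_le h n j

lemma phiComp_bddAbove (j : ℕ) (h : Hyp d m βl βh μ ν P J X) :
    BddAbove (Set.range fun n => phiComp m ν j n 0) :=
  ⟨1, by rintro x ⟨n, rfl⟩; exact (phiComp_bounds h n j).2⟩

lemma tendsto_phiComp_fExt (h : Hyp d m βl βh μ ν P J X) (j : ℕ) :
    Tendsto (fun n => phiComp m ν j n 0) atTop (𝓝 (fExt m ν j)) :=
  tendsto_atTop_ciSup (phiComp_mono_n h j) (phiComp_bddAbove j h)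

lemma fExt_nonneg (h : Hyp d m βl βh μ ν P J X) (j : ℕ) : 0 ≤ fExt m ν j :=
  le_trans (phiComp_bounds h 0 j).1 (le_ciSup (phiComp_bddAbove j h) 0)

lemma fExt_le_one (h : Hyp d m βl βh μ ν P J X) (j : ℕ) : fExt m ν j ≤ 1 :=
  ciSup_le fun n => (phiComp_bounds h n j).2

lemma prod_ite_const_eq_pow {n : ℕ} (c : ℝ) (y : Fin n → Bool) :
    (∏ k : Fin n, (if y k = true then c else 1))
      = c ^ (Finset.univ.filter fun k : Fin n => y k = true).card := by
  rw [← Finset.prod_filter, Finset.prod_const]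

end Phi
/-! ### The main identity -/

section MainClaim
variable {Ω : Type} [MeasurableSpace Ω] {d : ℕ} {m : ℕ → ℕ} {βl βh : ℝ}
  {μ : ∀ j : ℕ, Measure (Fin (m j) → ℝ)} {ν : Bool → ∀ j : ℕ, Measure (Fin (m j) → Bool)}
  {P : Measure Ω} {J : List ℕ → Ω → Set (EuclideanSpace ℝ (Fin d))} {X : List ℕ → Ω → Bool}
set_option linter.unusedSectionVars false

lemma prod_tree_succ {R : Type*} [CommMonoid R] (m : ℕ → ℕ) (j : ℕ) (f : List ℕ → R) :
    ∏ w ∈ treeWords m (j + 1), f w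
      = ∏ u ∈ treeWords m j, ∏ k ∈ Finset.range (m j), f (u ++ [k]) := by
  show ∏ w ∈ (treeWords m j).biUnion fun u => (Finset.range (m j)).image fun k => u ++ [k],
      f w = _
  rw [Finset.prod_biUnion]
  · exact Finset.prod_congr rfl fun u hu =>
      Finset.prod_image fun k hk k' hk' hkk => by simpa using hkk
  · intro a ha b hb hab
    simp only [Function.onFun]
    rw [Finset.disjoint_left]
    intro w hwa hwb
    simp only [Finset.mem_image, Finset.mem_range] at hwa hwb
    obtain ⟨k, hk, rfl⟩ := hwa
    obtain ⟨k', hk', hw⟩ := hwb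
    apply hab
    have := congrArg List.dropLast hw
    simpa using this.symm

lemma mem_treeWords_dropLast {j : ℕ} {w : List ℕ} (h : w ∈ treeWords m (j + 1)) :
    w.dropLast ∈ treeWords m j := by
  obtain ⟨hv, hl⟩ := mem_treeWords.1 h
  have hne : w ≠ [] := by intro hh; rw [hh] at hl; simp at hl
  have hv2 : TreeValid m (w.dropLast ++ [w.getLast hne]) := by
    rw [List.dropLast_append_getLast hne]; exact hv
  refine mem_treeWords.2 ⟨(treeValid_append_iff.1 hv2).1, ?_⟩
  rw [List.length_dropLast, hl]
  omega

lemma CL1 (h : Hyp d m βl βh μ ν P J X) (j : ℕ)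
    (e : List ℕ → Ω → Bool)
    (he : ∀ u ∈ treeWords m j, MeasurableSet[Fsig m X j] {ω | e u ω = true})
    (g : List ℕ → (Fin (m j) → Bool) → ℝ) (hg : ∀ u y, |g u y| ≤ 1) :
    ∫ ω, ∏ u ∈ treeWords m j, (if (e u ω && X u ω) = true
        then g u (fun k : Fin (m j) => X (u ++ [(k : ℕ)]) ω) else 1) ∂P
      = ∫ ω, ∏ u ∈ treeWords m j, (if (e u ω && X u ω) = true
        then ∫ y, g u y ∂(ν true j) else 1) ∂P := by
  have := CL h j e he g hg (treeWords m j) subset_rfl (fun _ => 1)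
    stronglyMeasurable_const (fun ω => by norm_num)
  simpa only [one_mul] using this

lemma mainClaim (h : Hyp d m βl βh μ ν P J X) :
    ∀ (n j : ℕ) (e : List ℕ → Ω → Bool),
      (∀ u ∈ treeWords m j, MeasurableSet[Fsig m X j] {ω | e u ω = true}) →
    ∫ ω, ∏ u ∈ treeWords m j, (if (e u ω && X u ω) = true then DeadI m X n u ω else 1) ∂P
      = ∫ ω, ∏ u ∈ treeWords m j,
          (if (e u ω && X u ω) = true then phiComp m ν j n 0 else 1) ∂P := by
  intro n
  induction n with
  | zero =>
    intro j e he
    have hgb : ∀ (u : List ℕ) (y : Fin (m j) → Bool),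
        |(∏ k : Fin (m j), (if y k = true then (0:ℝ) else 1))| ≤ 1 := by
      intro u y
      rw [Finset.abs_prod]
      exact Finset.prod_le_one (fun _ _ => abs_nonneg _)
        (fun k _ => by split_ifs <;> norm_num)
    have key := CL1 h j e he
      (fun u y => ∏ k : Fin (m j), (if y k = true then (0:ℝ) else 1)) hgb
    calc ∫ ω, ∏ u ∈ treeWords m j,
            (if (e u ω && X u ω) = true then DeadI m X 0 u ω else 1) ∂P
        = ∫ ω, ∏ u ∈ treeWords m j, (if (e u ω && X u ω) = true
            then (∏ k : Fin (m j), (if X (u ++ [(k : ℕ)]) ω = true then (0:ℝ) else 1))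
            else 1) ∂P := by
          apply integral_congr_ae; apply Filter.Eventually.of_forall; intro ω; dsimp only
          refine Finset.prod_congr rfl fun u hu => ?_
          obtain ⟨-, hul⟩ := mem_treeWords.1 hu
          refine if_congr Iff.rfl ?_ rfl
          show DeadI m X 0 u ω = _
          simp only [DeadI]
          rw [hul, ← Fin.prod_univ_eq_prod_range]
      _ = ∫ ω, ∏ u ∈ treeWords m j, (if (e u ω && X u ω) = true
            then ∫ y, (∏ k : Fin (m j), (if y k = true then (0:ℝ) else 1)) ∂(ν true j)
            else 1) ∂P := key
      _ = ∫ ω, ∏ u ∈ treeWords m j,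
            (if (e u ω && X u ω) = true then phiComp m ν j 0 0 else 1) ∂P := by
          apply integral_congr_ae; apply Filter.Eventually.of_forall; intro ω; dsimp only
          refine Finset.prod_congr rfl fun u hu => ?_
          refine if_congr Iff.rfl ?_ rfl
          show _ = phiFn m ν true j 0
          show _ = ∫ x, (0:ℝ) ^ (Finset.univ.filter fun k : Fin (m j) => x k = true).card
            ∂(ν true j)
          apply integral_congr_ae; apply Filter.Eventually.of_forall; intro y
          exact prod_ite_const_eq_pow 0 y
  | succ n ih =>
    intro j e he
    have he' : ∀ w ∈ treeWords m (j + 1),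
        MeasurableSet[Fsig m X (j + 1)]
          {ω | (e w.dropLast ω && X w.dropLast ω) = true} := by
      intro w hw
      have hdl := mem_treeWords_dropLast hw
      obtain ⟨hdv, hdl2⟩ := mem_treeWords.1 hdl
      exact measurableSet_andX (Fsig_mono (Nat.le_succ j) _ (he _ hdl))
        (measurableSet_X_true (comap_le_Fsig hdv (by omega)))
    have hgb : ∀ (u : List ℕ) (y : Fin (m j) → Bool),
        |(∏ k : Fin (m j), (if y k = true then phiComp m ν (j + 1) n 0 else 1))| ≤ 1 := by
      intro u y
      rw [Finset.abs_prod]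
      refine Finset.prod_le_one (fun _ _ => abs_nonneg _) (fun k _ => ?_)
      split_ifs
      · rw [abs_of_nonneg (phiComp_bounds h n (j + 1)).1]
        exact (phiComp_bounds h n (j + 1)).2
      · norm_num
    calc ∫ ω, ∏ u ∈ treeWords m j,
            (if (e u ω && X u ω) = true then DeadI m X (n + 1) u ω else 1) ∂P
        = ∫ ω, ∏ w ∈ treeWords m (j + 1),
            (if ((e w.dropLast ω && X w.dropLast ω) && X w ω) = true
              then DeadI m X n w ω else 1) ∂P := by
          apply integral_congr_ae; apply Filter.Eventually.of_forall; intro ω; dsimp only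
          rw [prod_tree_succ m j (fun w => if ((e w.dropLast ω && X w.dropLast ω) && X w ω) = true
            then DeadI m X n w ω else 1)]
          refine Finset.prod_congr rfl fun u hu => ?_
          obtain ⟨-, hul⟩ := mem_treeWords.1 hu
          simp only [List.dropLast_concat]
          by_cases hb : (e u ω && X u ω) = true
          · rw [if_pos hb]
            simp only [hb, Bool.true_and]
            show DeadI m X (n + 1) u ω = _
            simp only [DeadI]
            rw [hul]
          · have hb' : (e u ω && X u ω) = false := by
              revert hb; cases (e u ω && X u ω) <;> simp
            rw [if_neg hb]
            symm
            apply Finset.prod_eq_one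
            intro k hk
            rw [if_neg]
            rw [hb', Bool.false_and]
            simp
      _ = ∫ ω, ∏ w ∈ treeWords m (j + 1),
            (if ((e w.dropLast ω && X w.dropLast ω) && X w ω) = true
              then phiComp m ν (j + 1) n 0 else 1) ∂P :=
          ih (j + 1) (fun w ω => e w.dropLast ω && X w.dropLast ω) he'
      _ = ∫ ω, ∏ u ∈ treeWords m j, (if (e u ω && X u ω) = true
            then (∏ k : Fin (m j),
              (if X (u ++ [(k : ℕ)]) ω = true then phiComp m ν (j + 1) n 0 else 1))
            else 1) ∂P := by
          apply integral_congr_ae; apply Filter.Eventually.of_forall; intro ω; dsimp only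
          rw [prod_tree_succ m j (fun w => if ((e w.dropLast ω && X w.dropLast ω) && X w ω) = true
            then phiComp m ν (j + 1) n 0 else 1)]
          refine Finset.prod_congr rfl fun u hu => ?_
          simp only [List.dropLast_concat]
          by_cases hb : (e u ω && X u ω) = true
          · rw [if_pos hb]
            simp only [hb, Bool.true_and]
            rw [← Fin.prod_univ_eq_prod_range]
          · have hb' : (e u ω && X u ω) = false := by
              revert hb; cases (e u ω && X u ω) <;> simp
            rw [if_neg hb]
            apply Finset.prod_eq_one
            intro k hk
            rw [if_neg]
            rw [hb', Bool.false_and]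
            simp
      _ = ∫ ω, ∏ u ∈ treeWords m j, (if (e u ω && X u ω) = true
            then ∫ y, (∏ k : Fin (m j),
              (if y k = true then phiComp m ν (j + 1) n 0 else 1)) ∂(ν true j)
            else 1) ∂P :=
          CL1 h j e he
            (fun u y => ∏ k : Fin (m j), (if y k = true then phiComp m ν (j + 1) n 0 else 1)) hgb
      _ = ∫ ω, ∏ u ∈ treeWords m j,
            (if (e u ω && X u ω) = true then phiComp m ν j (n + 1) 0 else 1) ∂P := by
          apply integral_congr_ae; apply Filter.Eventually.of_forall; intro ω; dsimp only
          refine Finset.prod_congr rfl fun u hu => ?_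
          refine if_congr Iff.rfl ?_ rfl
          show _ = phiFn m ν true j (phiComp m ν (j + 1) n 0)
          show _ = ∫ x, (phiComp m ν (j + 1) n 0)
            ^ (Finset.univ.filter fun k : Fin (m j) => x k = true).card ∂(ν true j)
          apply integral_congr_ae; apply Filter.Eventually.of_forall; intro y
          exact prod_ite_const_eq_pow _ y

end MainClaim
/-! ### Extinction events and their probabilities -/

section Events
variable {Ω : Type} [MeasurableSpace Ω] {d : ℕ} {m : ℕ → ℕ} {βl βh : ℝ}
  {μ : ∀ j : ℕ, Measure (Fin (m j) → ℝ)} {ν : Bool → ∀ j : ℕ, Measure (Fin (m j) → Bool)}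
  {P : Measure Ω} {J : List ℕ → Ω → Set (EuclideanSpace ℝ (Fin d))} {X : List ℕ → Ω → Bool}
set_option linter.unusedSectionVars false

/-- Every generation-`j` vertex in state 1 has no 1-chain of length `n+1` below it. -/
def EnSet (m : ℕ → ℕ) (X : List ℕ → Ω → Bool) (j n : ℕ) : Set Ω :=
  {ω | ∀ u ∈ treeWords m j, X u ω = true → DeadP m X n u ω}

/-- Every generation-`j` vertex in state 1 eventually dies out. -/
def EjSet (m : ℕ → ℕ) (X : List ℕ → Ω → Bool) (j : ℕ) : Set Ω :=
  ⋃ n, EnSet m X j n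

lemma measurableSet_EnSet (hX : ∀ v, Measurable (X v)) (j n : ℕ) :
    MeasurableSet (EnSet m X j n) := by
  have : EnSet m X j n = ⋂ u ∈ (treeWords m j : Set (List ℕ)),
      ({ω | X u ω = true}ᶜ ∪ {ω | DeadP m X n u ω}) := by
    ext ω
    simp only [EnSet, Set.mem_setOf_eq, Set.mem_iInter, Set.mem_union, Set.mem_compl_iff,
      Finset.mem_coe]
    constructor
    · intro hh u hu
      by_cases hXu : X u ω = true
      · exact Or.inr (hh u hu hXu)
      · exact Or.inl hXu
    · intro hh u hu hXu
      rcases hh u hu with h1 | h1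
      · exact absurd hXu h1
      · exact h1
  rw [this]
  exact MeasurableSet.biInter (treeWords m j).countable_toSet fun u _ =>
    ((measurableSet_X_eq hX u true).compl).union (measurableSet_DeadP hX n u)

lemma measurableSet_EjSet (hX : ∀ v, Measurable (X v)) (j : ℕ) :
    MeasurableSet (EjSet m X j) :=
  MeasurableSet.iUnion fun n => measurableSet_EnSet hX j n

lemma EnSet_mono (j : ℕ) : Monotone (EnSet m X j) := by
  apply monotone_nat_of_le_succ
  intro n ω hω u hu hXu
  exact DeadP_succ_of n u ω (hω u hu hXu)

lemma prodDead_eq_indicator (j n : ℕ) (ω : Ω) :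
    (∏ u ∈ treeWords m j, (if X u ω = true then DeadI m X n u ω else 1))
      = Set.indicator (EnSet m X j n) (fun _ => (1:ℝ)) ω := by
  by_cases hω : ω ∈ EnSet m X j n
  · rw [Set.indicator_of_mem hω]
    apply Finset.prod_eq_one
    intro u hu
    by_cases hXu : X u ω = true
    · rw [if_pos hXu, DeadI_eq, if_pos (hω u hu hXu)]
    · rw [if_neg hXu]
  · rw [Set.indicator_of_notMem hω]
    simp only [EnSet, Set.mem_setOf_eq, not_forall] at hω
    obtain ⟨u, hu, hXu, hnd⟩ := hω
    apply Finset.prod_eq_zero hu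
    rw [if_pos hXu, DeadI_eq, if_neg hnd]

lemma prodConst_eq_pow (j : ℕ) (c : ℝ) (ω : Ω) :
    (∏ u ∈ treeWords m j, (if X u ω = true then c else 1)) = c ^ Scount m X j ω := by
  rw [← Finset.prod_filter, Finset.prod_const]
  rfl

lemma measurable_Scount (hX : ∀ v, Measurable (X v)) (j : ℕ) :
    Measurable (Scount m X j) := by
  have : Scount m X j = fun ω => ∑ u ∈ treeWords m j, (if X u ω = true then 1 else 0) := by
    funext ω
    rw [Scount, Finset.card_filter]
  rw [this]
  exact Finset.measurable_sum _ fun u _ =>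
    Measurable.ite (measurableSet_X_eq hX u true) measurable_const measurable_const

lemma measurable_pow_Scount (hX : ∀ v, Measurable (X v)) (j : ℕ) (c : ℝ) :
    Measurable fun ω => c ^ Scount m X j ω :=
  (measurable_from_top (f := fun k : ℕ => c ^ k)).comp (measurable_Scount hX j)

lemma Pn_eq (h : Hyp d m βl βh μ ν P J X) (j n : ℕ) :
    (P (EnSet m X j n)).toReal = ∫ ω, (phiComp m ν j n 0) ^ Scount m X j ω ∂P := by
  have hme : ∀ u ∈ treeWords m j,
      MeasurableSet[Fsig m X j] {ω : Ω | (fun (_ : List ℕ) (_ : Ω) => true) u ω = true} := by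
    intro u hu
    have : {ω : Ω | (fun (_ : List ℕ) (_ : Ω) => true) u ω = true} = Set.univ := by
      ext ω; simp
    rw [this]
    exact MeasurableSet.univ
  have hmain := mainClaim h n j (fun _ _ => true) hme
  calc (P (EnSet m X j n)).toReal
      = ∫ ω, Set.indicator (EnSet m X j n) (fun _ => (1:ℝ)) ω ∂P :=
        (integral_indicator_one (measurableSet_EnSet h.hXmeas j n)).symm
    _ = ∫ ω, ∏ u ∈ treeWords m j, (if (true && X u ω) = true
          then DeadI m X n u ω else 1) ∂P := by
        apply integral_congr_ae; apply Filter.Eventually.of_forall; intro ω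
        dsimp only
        rw [← prodDead_eq_indicator j n ω]
        exact Finset.prod_congr rfl fun u hu => by rw [Bool.true_and]
    _ = ∫ ω, ∏ u ∈ treeWords m j, (if (true && X u ω) = true
          then phiComp m ν j n 0 else 1) ∂P := hmain
    _ = ∫ ω, (phiComp m ν j n 0) ^ Scount m X j ω ∂P := by
        apply integral_congr_ae; apply Filter.Eventually.of_forall; intro ω
        dsimp only
        rw [← prodConst_eq_pow j _ ω]
        exact Finset.prod_congr rfl fun u hu => by rw [Bool.true_and]

lemma Pj_eq (h : Hyp d m βl βh μ ν P J X) (j : ℕ) :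
    (P (EjSet m X j)).toReal = PhiFn P m X j (fExt m ν j) := by
  haveI := h.hP
  -- limit of the left-hand side
  have hL : Tendsto (fun n => (P (EnSet m X j n)).toReal) atTop
      (𝓝 ((P (EjSet m X j)).toReal)) := by
    have h1 : Tendsto (fun n => P (EnSet m X j n)) atTop (𝓝 (P (EjSet m X j))) :=
      tendsto_measure_iUnion_atTop (EnSet_mono j)
    exact (ENNReal.tendsto_toReal (measure_ne_top P _)).comp h1
  -- limit of the right-hand side
  have hR : Tendsto (fun n => ∫ ω, (phiComp m ν j n 0) ^ Scount m X j ω ∂P) atTop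
      (𝓝 (∫ ω, (fExt m ν j) ^ Scount m X j ω ∂P)) := by
    apply tendsto_integral_of_dominated_convergence (fun _ => (1:ℝ))
    · intro n
      exact (measurable_pow_Scount h.hXmeas j _).aestronglyMeasurable
    · exact integrable_const 1
    · intro n
      apply Filter.Eventually.of_forall
      intro ω
      rw [Real.norm_eq_abs, abs_pow]
      apply pow_le_one₀ (abs_nonneg _)
      rw [abs_of_nonneg (phiComp_bounds h n j).1]
      exact (phiComp_bounds h n j).2
    · apply Filter.Eventually.of_forall
      intro ω
      exact (tendsto_phiComp_fExt h j).pow (Scount m X j ω)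
  have := funext fun n => Pn_eq h j n
  rw [show (fun n => (P (EnSet m X j n)).toReal)
      = fun n => ∫ ω, (phiComp m ν j n 0) ^ Scount m X j ω ∂P from this] at hL
  exact tendsto_nhds_unique hL hR

lemma EjSet_antitone (j : ℕ) : EjSet m X (j + 1) ⊆ EjSet m X j := by
  intro ω hω
  obtain ⟨n, hn⟩ := Set.mem_iUnion.1 hω
  apply Set.mem_iUnion.2 ⟨n + 1, ?_⟩
  intro u hu hXu
  obtain ⟨huv, hul⟩ := mem_treeWords.1 hu
  intro k hk hXk
  have hk' : k < m j := by rwa [hul] at hk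
  have hmem : u ++ [k] ∈ treeWords m (j + 1) :=
    mem_treeWords.2 ⟨treeValid_append_iff.2 ⟨huv, by rwa [hul]⟩, by simp [hul]⟩
  exact hn (u ++ [k]) hmem hXk

end Events
/-! ### The limit set is empty iff every generation dies out -/

section Theta
variable {Ω : Type} [MeasurableSpace Ω] {d : ℕ} {m : ℕ → ℕ} {βl βh : ℝ}
  {μ : ∀ j : ℕ, Measure (Fin (m j) → ℝ)} {ν : Bool → ∀ j : ℕ, Measure (Fin (m j) → Bool)}
  {P : Measure Ω} {J : List ℕ → Ω → Set (EuclideanSpace ℝ (Fin d))} {X : List ℕ → Ω → Bool}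
set_option linter.unusedSectionVars false

lemma lemA {ω : Ω} (hne : (ThetaSet m J X ω).Nonempty) : ∃ j, ω ∉ EjSet m X j := by
  obtain ⟨x, hx⟩ := hne
  rw [ThetaSet] at hx
  simp only [Set.mem_iUnion, Set.mem_setOf_eq] at hx
  obtain ⟨u, hu, hxK⟩ := hx
  obtain ⟨ζ, hτ, hJ⟩ := hxK
  have hpw : prefixWord ζ u.length = u := by
    obtain ⟨-, hpre, -⟩ := hτ u.length le_rfl
    exact (hpre.eq_of_length (by rw [prefixWord_length])).symm
  have hXall : ∀ l, u.length ≤ l → X (prefixWord ζ l) ω = true := by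
    intro l hl
    obtain ⟨-, -, hXc⟩ := hτ l hl
    have := hXc l hl (by rw [prefixWord_length])
    rwa [List.take_of_length_le (by rw [prefixWord_length])] at this
  have hζ : ∀ l, u.length ≤ l → ζ l < m l := by
    intro l hl
    obtain ⟨hv, -, -⟩ := hτ (l + 1) (by omega)
    have h2 := (treeValid_iff.1 hv) l (by rw [prefixWord_length]; omega)
    rwa [prefixWord_getElem ζ (by omega : l < l + 1)] at h2
  have halive : ∀ n l, u.length ≤ l → ¬ DeadP m X n (prefixWord ζ l) ω := by
    intro n
    induction n with
    | zero =>
      intro l hl hdead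
      have h1 := hdead (ζ l) (by rw [prefixWord_length]; exact hζ l hl)
      rw [← prefixWord_succ] at h1
      have h2 := hXall (l + 1) (by omega)
      rw [h1] at h2
      cases h2
    | succ n ih =>
      intro l hl hdead
      have h1 := hdead (ζ l) (by rw [prefixWord_length]; exact hζ l hl)
        (by rw [← prefixWord_succ]; exact hXall (l + 1) (by omega))
      rw [← prefixWord_succ] at h1
      exact ih (l + 1) (by omega) h1
  refine ⟨u.length, fun hmem => ?_⟩
  obtain ⟨n, hn⟩ := Set.mem_iUnion.1 hmem
  have hXu : X u ω = true := by rw [← hpw]; exact hXall u.length le_rfl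
  have hD := hn u (mem_treeWords.2 ⟨hu, rfl⟩) hXu
  exact halive n u.length le_rfl (by rwa [hpw])

lemma lemB (h : Hyp d m βl βh μ ν P J X) {ω : Ω} {j : ℕ} (hω : ω ∉ EjSet m X j) :
    (ThetaSet m J X ω).Nonempty := by
  classical
  -- Step 1: a persistent vertex of generation j
  have step1 : ∃ u ∈ treeWords m j, X u ω = true ∧ ∀ n, ¬ DeadP m X n u ω := by
    by_contra hcon
    push_neg at hcon
    apply hω
    set N := (treeWords m j).sup (fun u =>
      if hd : ∃ n, DeadP m X n u ω then hd.choose else 0) with hN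
    refine Set.mem_iUnion.2 ⟨N, ?_⟩
    intro u hu hXu
    obtain ⟨n0, hn0⟩ := hcon u hu hXu
    have hdex : ∃ n, DeadP m X n u ω := ⟨n0, hn0⟩
    have hle : (if hd : ∃ n, DeadP m X n u ω then hd.choose else 0) ≤ N := by
      rw [hN]
      exact Finset.le_sup (f := fun u => if hd : ∃ n, DeadP m X n u ω then hd.choose else 0) hu
    rw [dif_pos hdex] at hle
    exact DeadP_mono hle u ω hdex.choose_spec
  obtain ⟨u0, hu0tw, hXu0, halive0⟩ := step1
  obtain ⟨hu0v, hu0len⟩ := mem_treeWords.1 hu0tw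
  -- Step 2: one-step extension of a persistent vertex
  have step : ∀ w : List ℕ, (TreeValid m w ∧ X w ω = true ∧ ∀ n, ¬ DeadP m X n w ω) →
      ∃ k, k < m w.length ∧ (TreeValid m (w ++ [k]) ∧ X (w ++ [k]) ω = true
        ∧ ∀ n, ¬ DeadP m X n (w ++ [k]) ω) := by
    rintro w ⟨hwv, hwX, hwa⟩
    by_contra hno
    push_neg at hno
    have hno' : ∀ k, k < m w.length → X (w ++ [k]) ω = true →
        ∃ n, DeadP m X n (w ++ [k]) ω := by
      intro k hk hXk
      exact hno k hk (treeValid_append_iff.2 ⟨hwv, hk⟩) hXk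
    set N := (Finset.range (m w.length)).sup (fun k =>
      if hd : ∃ n, DeadP m X n (w ++ [k]) ω then hd.choose else 0) with hN
    apply hwa (N + 1)
    intro k hk hXk
    obtain ⟨n0, hn0⟩ := hno' k hk hXk
    have hdex : ∃ n, DeadP m X n (w ++ [k]) ω := ⟨n0, hn0⟩
    have hle : (if hd : ∃ n, DeadP m X n (w ++ [k]) ω then hd.choose else 0) ≤ N := by
      rw [hN]
      exact Finset.le_sup (f := fun k =>
        if hd : ∃ n, DeadP m X n (w ++ [k]) ω then hd.choose else 0) (Finset.mem_range.2 hk)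
    rw [dif_pos hdex] at hle
    exact DeadP_mono hle _ ω hdex.choose_spec
  -- Step 3: the infinite chain
  have hGood0 : TreeValid m u0 ∧ X u0 ω = true ∧ ∀ n, ¬ DeadP m X n u0 ω :=
    ⟨hu0v, hXu0, halive0⟩
  let c : ℕ → {w : List ℕ //
      TreeValid m w ∧ X w ω = true ∧ ∀ n, ¬ DeadP m X n w ω} := fun n =>
    Nat.rec ⟨u0, hGood0⟩ (fun _ p => ⟨p.1 ++ [(step p.1 p.2).choose],
      (step p.1 p.2).choose_spec.2⟩) n
  have hc0 : (c 0).1 = u0 := rfl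
  have hcs : ∀ n, (c (n + 1)).1 = (c n).1 ++ [(step (c n).1 (c n).2).choose] := fun n => rfl
  have clen : ∀ n, (c n).1.length = j + n := by
    intro n
    induction n with
    | zero => simp [hc0, hu0len]
    | succ n ih =>
      have hstep : (c (n + 1)).1.length = (c n).1.length + 1 := by
        rw [hcs n, List.length_append]
        simp
      omega
  have cpre1 : ∀ n, (c n).1 <+: (c (n + 1)).1 := fun n => by
    rw [hcs n]; exact List.prefix_append _ _
  have cpre : ∀ a b, a ≤ b → (c a).1 <+: (c b).1 := by
    intro a b hab
    induction b with
    | zero => rw [Nat.le_zero.1 hab]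
    | succ b ih =>
      rcases Nat.lt_or_ge a (b + 1) with h1 | h1
      · exact (ih (by omega)).trans (cpre1 b)
      · rw [show a = b + 1 by omega]
  set ζ : ℕ → ℕ := fun i => (c (i + 1)).1.getD i 0 with hζdef
  have hgetζ : ∀ n i, ∀ hi : i < (c n).1.length, ζ i = (c n).1[i] := by
    intro n i hi
    have hi1 : i < (c (i + 1)).1.length := by have := clen (i + 1); omega
    have hgd : ζ i = (c (i + 1)).1[i] := List.getD_eq_getElem _ _ hi1
    rcases le_total (i + 1) n with hle | hle
    · rw [hgd]; exact (cpre _ _ hle).getElem hi1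
    · rw [hgd]; exact ((cpre _ _ hle).getElem hi).symm
  have pw_eq : ∀ N n, N ≤ j + n → prefixWord ζ N = (c n).1.take N := by
    intro N n hNn
    apply List.ext_getElem
    · rw [prefixWord_length, List.length_take]
      have := clen n; omega
    · intro i h1 h2
      rw [prefixWord_length] at h1
      rw [prefixWord_getElem ζ h1, List.getElem_take]
      exact hgetζ n i (by have := clen n; omega)
  have pw_c : ∀ n, prefixWord ζ (j + n) = (c n).1 := by
    intro n
    rw [pw_eq (j + n) n le_rfl]
    exact List.take_of_length_le (le_of_eq (clen n))
  have pw_c' : ∀ l, j ≤ l → prefixWord ζ l = (c (l - j)).1 := by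
    intro l hl
    have := pw_c (l - j)
    rwa [show j + (l - j) = l by omega] at this
  have hvalid_pw : ∀ i, TreeValid m (prefixWord ζ i) := fun i => by
    rw [pw_eq i i (by omega)]
    exact treeValid_take (c i).2.1 i
  have hζlt : ∀ i, ζ i < m i := fun i => by
    have hv := hvalid_pw (i + 1)
    have h2 := (treeValid_iff.1 hv) i (by rw [prefixWord_length]; omega)
    rwa [prefixWord_getElem ζ (by omega)] at h2
  have hsub : ∀ i, J (prefixWord ζ (i + 1)) ω ⊆ J (prefixWord ζ i) ω := fun i => by
    rw [prefixWord_succ]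
    refine h.hAsub (prefixWord ζ i) (hvalid_pw i) ω (ζ i) ?_
    rw [prefixWord_length]
    exact hζlt i
  have hne : ∀ i, (J (prefixWord ζ i) ω).Nonempty := fun i => by
    rcases Set.eq_empty_or_nonempty (J (prefixWord ζ i) ω) with hE | hE
    · exfalso
      have hd := h.hJdiam _ (hvalid_pw i) ω
      rw [hE, Metric.diam_empty] at hd
      exact lt_irrefl 0 hd
    · exact hE
  obtain ⟨x, hx⟩ := IsCompact.nonempty_iInter_of_sequence_nonempty_isCompact_isClosed
    (fun i => J (prefixWord ζ i) ω) hsub hne (h.hJcompact _ (hvalid_pw 0) ω)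
    (fun i => (h.hJcompact _ (hvalid_pw i) ω).isClosed)
  have hXpw : ∀ l, j ≤ l → X (prefixWord ζ l) ω = true := fun l hl => by
    rw [pw_c' l hl]
    exact (c (l - j)).2.2.1
  have hmemtau : ∀ l, u0.length ≤ l → memTau m X u0 (prefixWord ζ l) ω := by
    intro l hl
    rw [hu0len] at hl
    refine ⟨hvalid_pw l, ?_, ?_⟩
    · rw [pw_c' l hl]
      have hpre := cpre 0 (l - j) (by omega)
      rwa [hc0] at hpre
    · intro i hi1 hi2
      rw [hu0len] at hi1
      rw [prefixWord_length] at hi2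
      have htake : (prefixWord ζ l).take i = prefixWord ζ i := by
        rw [pw_c' l hl, (pw_eq i (l - j) (by omega))]
      rw [htake]
      exact hXpw i hi1
  refine ⟨x, ?_⟩
  rw [ThetaSet]
  refine Set.mem_iUnion.2 ⟨u0, Set.mem_iUnion.2 ⟨hu0v, ?_⟩⟩
  exact ⟨ζ, hmemtau, fun i => Set.mem_iInter.1 hx i⟩

lemma Theta_eq (h : Hyp d m βl βh μ ν P J X) :
    {ω | ThetaSet m J X ω = ∅} = ⋂ j, EjSet m X j := by
  ext ω
  simp only [Set.mem_setOf_eq, Set.mem_iInter]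
  constructor
  · intro hΘ j
    by_contra hj
    have := lemB h hj
    rw [hΘ] at this
    exact Set.not_nonempty_empty this
  · intro hm2
    rcases Set.eq_empty_or_nonempty (ThetaSet m J X ω) with hE | hE
    · exact hE
    · obtain ⟨j, hj⟩ := lemA hE
      exact absurd (hm2 j) hj

end Theta
theorem stmt1
    (d : ℕ) (m : ℕ → ℕ) (βl βh : ℝ)
    (μ : ∀ j : ℕ, Measure (Fin (m j) → ℝ))
    (ν : Bool → ∀ j : ℕ, Measure (Fin (m j) → Bool))
    (Ω : Type) [MeasurableSpace Ω] (P : Measure Ω)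
    (J : List ℕ → Ω → Set (EuclideanSpace ℝ (Fin d)))
    (X : List ℕ → Ω → Bool)
    (h : Hyp d m βl βh μ ν P J X)
    (hd0 : 0 ≤ dstar m μ ν) :
    Antitone (fun j : ℕ => PhiFn P m X j (fExt m ν j)) ∧
    Tendsto (fun j : ℕ => PhiFn P m X j (fExt m ν j)) atTop
      (𝓝 ((P {ω | ThetaSet m J X ω = ∅}).toReal)) := by
  haveI := h.hP
  have hfun : (fun j : ℕ => PhiFn P m X j (fExt m ν j))
      = fun j : ℕ => (P (EjSet m X j)).toReal := funext fun j => (Pj_eq h j).symm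
  have hanti : Antitone fun j : ℕ => EjSet m X j :=
    antitone_nat_of_succ_le fun j => EjSet_antitone j
  constructor
  · rw [hfun]
    intro a b hab
    exact ENNReal.toReal_mono (measure_ne_top P _) (measure_mono (hanti hab))
  · rw [hfun]
    have hmeas : ∀ j, MeasurableSet (EjSet m X j) := measurableSet_EjSet h.hXmeas
    have h1 : Tendsto (fun j => P (EjSet m X j)) atTop (𝓝 (P (⋂ j, EjSet m X j))) :=
      tendsto_measure_iInter_atTop (fun j => (hmeas j).nullMeasurableSet) hanti
        ⟨0, measure_ne_top P _⟩
    have h2 := (ENNReal.tendsto_toReal (measure_ne_top P _)).comp h1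
    rw [Theta_eq h]
    exact h2
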